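/- arXiv:1806.06805 — 2 statements merged into one kernel-verified Lean document; each statement's English description precedes it below -/
import Mathlib

section
/- Assume a < b. Then the center of the sphere lies on the OZ-axis, i.e. x_c = 0 and y_c = 0, if and only if both −a² and −b² are roots of the characteristic polynomial f. -/
/-!
At `λ = -a²` the first diagonal entry `λ/a² + 1` of `λP + S` vanishes, and expanding the
determinant leaves `f(-a²) = x_c² (a²/b² - 1)`; symmetrically `f(-b²) = y_c² (b²/a² - 1)`.
Since `a² ≠ b²`, neither factor vanishes.
-/

open Matrix Polynomial

/-- The 4×4 matrix of the elliptic paraboloid x²/a² + y²/b² - z = 0. -/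
noncomputable def Pmat (a b : ℝ) : Matrix (Fin 4) (Fin 4) ℝ :=
  !![1/a^2, 0, 0, 0;
     0, 1/b^2, 0, 0;
     0, 0, 0, -(1/2 : ℝ);
     0, 0, -(1/2 : ℝ), 0]

/-- The 4×4 matrix of the sphere (x-x_c)² + (y-y_c)² + (z-z_c)² = r². -/
noncomputable def Smat (xc yc zc r : ℝ) : Matrix (Fin 4) (Fin 4) ℝ :=
  !![1, 0, 0, -xc;
     0, 1, 0, -yc;
     0, 0, 1, -zc;
     -xc, -yc, -zc, xc^2 + yc^2 + zc^2 - r^2]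

/-- The characteristic polynomial f(λ) = det(λP + S), as a real polynomial in λ. -/
noncomputable def charPoly (a b xc yc zc r : ℝ) : Polynomial ℝ :=
  Matrix.det ((X : Polynomial ℝ) • (Pmat a b).map C + (Smat xc yc zc r).map C)

lemma eval_charPoly (a b xc yc zc r t : ℝ) :
    (charPoly a b xc yc zc r).eval t = (t • Pmat a b + Smat xc yc zc r).det := by
  rw [charPoly, ← coe_evalRingHom, RingHom.map_det]
  congr 1
  ext i j
  simp only [RingHom.mapMatrix_apply, coe_evalRingHom, map_apply, Matrix.add_apply,
    Matrix.smul_apply, smul_eq_mul, eval_add, eval_mul, eval_X, eval_C]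

lemma det_smul_Pmat_add_Smat (a b xc yc zc r t : ℝ) :
    (t • Pmat a b + Smat xc yc zc r).det =
      (t / a^2 + 1) * ((t / b^2 + 1) * (xc^2 + yc^2 + zc^2 - r^2 - (t / 2 + zc)^2) - yc^2)
        - xc^2 * (t / b^2 + 1) := by
  simp [Pmat, Smat, det_succ_row_zero, Fin.sum_univ_succ, Fin.succAbove]
  ring

section

variable {a b xc yc zc r : ℝ}

lemma eval_charPoly_neg_sq_left (ha : a ≠ 0) :
    (charPoly a b xc yc zc r).eval (-a^2) = xc^2 * (a^2 / b^2 - 1) := by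
  rw [eval_charPoly, det_smul_Pmat_add_Smat, neg_div (a^2) (a^2), div_self (pow_ne_zero 2 ha)]
  ring

lemma eval_charPoly_neg_sq_right (hb : b ≠ 0) :
    (charPoly a b xc yc zc r).eval (-b^2) = yc^2 * (b^2 / a^2 - 1) := by
  rw [eval_charPoly, det_smul_Pmat_add_Smat, neg_div (b^2) (b^2), div_self (pow_ne_zero 2 hb)]
  ring

lemma isRoot_charPoly_neg_sq_left_iff (ha : a ≠ 0) (hb : b ≠ 0) (hab : a^2 ≠ b^2) :
    (charPoly a b xc yc zc r).IsRoot (-a^2) ↔ xc = 0 := by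
  have hfactor : a^2 / b^2 - 1 ≠ 0 :=
    sub_ne_zero.2 fun h ↦ hab ((div_eq_one_iff_eq (pow_ne_zero 2 hb)).1 h)
  rw [IsRoot, eval_charPoly_neg_sq_left ha, mul_eq_zero, or_iff_left hfactor,
    pow_eq_zero_iff two_ne_zero]

lemma isRoot_charPoly_neg_sq_right_iff (ha : a ≠ 0) (hb : b ≠ 0) (hab : a^2 ≠ b^2) :
    (charPoly a b xc yc zc r).IsRoot (-b^2) ↔ yc = 0 := by
  have hfactor : b^2 / a^2 - 1 ≠ 0 :=
    sub_ne_zero.2 fun h ↦ hab ((div_eq_one_iff_eq (pow_ne_zero 2 ha)).1 h).symm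
  rw [IsRoot, eval_charPoly_neg_sq_right hb, mul_eq_zero, or_iff_left hfactor,
    pow_eq_zero_iff two_ne_zero]

end

theorem center_on_axis_iff_roots_general (a b r xc yc zc : ℝ)
    (ha : 0 < a) (hab : a < b) :
    (xc = 0 ∧ yc = 0) ↔
      ((charPoly a b xc yc zc r).IsRoot (-a^2) ∧
       (charPoly a b xc yc zc r).IsRoot (-b^2)) := by
  have hb : b ≠ 0 := (ha.trans hab).ne'
  have hsq : a^2 ≠ b^2 := (pow_lt_pow_left₀ hab ha.le two_ne_zero).ne
  rw [isRoot_charPoly_neg_sq_left_iff ha.ne' hb hsq, isRoot_charPoly_neg_sq_right_iff ha.ne' hb hsq]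

/-- for a < b, the center of the sphere lies on the OZ-axis iff
both -a² and -b² are characteristic roots. -/
theorem center_on_axis_iff_roots (a b r xc yc zc : ℝ)
    (ha : 0 < a) (hab : a < b) (hr : 0 < r) :
    (xc = 0 ∧ yc = 0) ↔
      ((charPoly a b xc yc zc r).IsRoot (-a^2) ∧
       (charPoly a b xc yc zc r).IsRoot (-b^2)) :=
  center_on_axis_iff_roots_general a b r xc yc zc ha hab
end

section
/- Assume a < b and 2r ≤ a². Then 𝒮 and 𝒫 are tangent at some point if and only if one of the following holds: (1) −a² is a root of the characteristic polynomial f of multiplicity at least 3; or (2) f has a real root λ ∉ {−a², −b²} of multiplicity at least 2. -/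
/-!
Tangency at a point `p` of 𝒫 means that the centre of 𝒮 lies on the normal line of 𝒫 at `p`, say
at `p - (t/2) ∇F(p)` with `F = x²/a² + y²/b² - z`, and that `r = |t/2| ‖∇F(p)‖`. Then
`(S - tP)(p, 1) = 0`, and `-t` is in fact a double root of `f`. Conversely, from a double root
`λ ∉ {-a², -b²}` of `f` one recovers `p` by solving two linear equations with coefficients `λ + a²`
and `λ + b²`. At `λ = -a²` the first of them degenerates: there smallness forces `p` to be the
vertex and 𝒮 to be the sphere of radius `a²/2` centred at `(0, 0, a²/2)`, which is exactly the case
of a triple root at `-a²`. Smallness also gives `|t| ≤ 2r ≤ a² < b²`, so `-b²` never comes from a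
tangency.
-/

open Matrix Polynomial

/-- The sphere and the paraboloid are tangent at the point (x,y,z):
with X = (x,y,z,1)ᵗ one has XᵗPX = 0, XᵗSX = 0 and for every Y,
YᵗPX = 0 iff YᵗSX = 0 (same tangent plane). -/
def TangentAt (a b xc yc zc r x y z : ℝ) : Prop :=
  ![x, y, z, 1] ⬝ᵥ (Pmat a b).mulVec ![x, y, z, 1] = 0 ∧
  ![x, y, z, 1] ⬝ᵥ (Smat xc yc zc r).mulVec ![x, y, z, 1] = 0 ∧
  ∀ Y : Fin 4 → ℝ,
    Y ⬝ᵥ (Pmat a b).mulVec ![x, y, z, 1] = 0 ↔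
    Y ⬝ᵥ (Smat xc yc zc r).mulVec ![x, y, z, 1] = 0

theorem Polynomial.two_lt_rootMultiplicity_iff_isRoot {R : Type*} [CommRing R] [NoZeroDivisors R]
    [CharZero R] {p : R[X]} {t : R} (h : p ≠ 0) :
    2 < p.rootMultiplicity t ↔
      p.IsRoot t ∧ p.derivative.IsRoot t ∧ p.derivative.derivative.IsRoot t := by
  rw [lt_rootMultiplicity_iff_isRoot_iterate_derivative h]
  refine ⟨fun h ↦ ⟨h 0 (by simp), h 1 (by simp), h 2 le_rfl⟩, fun ⟨h0, h1, h2⟩ m hm ↦ ?_⟩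
  obtain (_ | _ | _ | m) := m
  exacts [h0, h1, h2, by lia]

theorem charPoly_eq (a b xc yc zc r : ℝ) :
    charPoly a b xc yc zc r =
      C (-r^2)
      + C ((1/a^2 + 1/b^2) * (xc^2 + yc^2 - r^2) - zc - xc^2/b^2 - yc^2/a^2) * X
      + C ((xc^2 + yc^2 - r^2)/(a^2*b^2) - (1/a^2 + 1/b^2) * zc - 1/4) * X^2
      + C (-(zc/(a^2*b^2)) - (1/a^2 + 1/b^2)/4) * X^3
      + C (-(1/(4*(a^2*b^2)))) * X^4 := by
  refine Polynomial.funext fun l ↦ ?_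
  simp [charPoly, det_succ_row_zero, Fin.sum_univ_succ, Fin.succAbove, Pmat, Smat]
  ring

theorem charPoly_ne_zero (a b xc yc zc : ℝ) {r : ℝ} (hr : r ≠ 0) :
    charPoly a b xc yc zc r ≠ 0 := by
  intro h
  have h0 := congrArg (eval 0) h
  rw [charPoly_eq] at h0
  simp [hr] at h0

section RootConfiguration

variable {a b xc yc zc r l : ℝ}

theorem eval_charPoly_s14 (ha : a ≠ 0) (hb : b ≠ 0) :
    a^2 * b^2 * (charPoly a b xc yc zc r).eval l =
      (l + a^2) * (l + b^2) * (xc^2 + yc^2 - r^2 - l*zc - l^2/4)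
        - a^2 * xc^2 * (l + b^2) - b^2 * yc^2 * (l + a^2) := by
  rw [charPoly_eq]
  simp only [eval_add, eval_mul, eval_C, eval_pow, eval_X]
  field_simp
  ring

theorem eval_derivative_charPoly (ha : a ≠ 0) (hb : b ≠ 0) :
    a^2 * b^2 * (charPoly a b xc yc zc r).derivative.eval l =
      (2*l + a^2 + b^2) * (xc^2 + yc^2 - r^2 - l*zc - l^2/4)
        - (l + a^2) * (l + b^2) * (l/2 + zc) - a^2 * xc^2 - b^2 * yc^2 := by
  rw [charPoly_eq]
  simp only [derivative_add, derivative_C, derivative_C_mul_X, derivative_C_mul_X_pow,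
    Nat.reduceSub, Nat.cast_ofNat, eval_add, eval_mul, eval_C, eval_pow, eval_X, eval_zero]
  field_simp
  ring

theorem eval_derivative_derivative_charPoly (ha : a ≠ 0) (hb : b ≠ 0) :
    a^2 * b^2 * (charPoly a b xc yc zc r).derivative.derivative.eval l =
      2 * (xc^2 + yc^2 - r^2 - l*zc - l^2/4) - 2 * (2*l + a^2 + b^2) * (l/2 + zc)
        - (l + a^2) * (l + b^2) / 2 := by
  rw [charPoly_eq]
  simp only [derivative_add, derivative_C, derivative_zero, derivative_C_mul_X,
    derivative_C_mul_X_pow, Nat.reduceSub, Nat.cast_ofNat, eval_add, eval_mul, eval_C, eval_pow,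
    eval_X, eval_zero]
  field_simp
  ring

theorem isRoot_charPoly_iff (ha : a ≠ 0) (hb : b ≠ 0) :
    (charPoly a b xc yc zc r).IsRoot l ↔
      (l + a^2) * (l + b^2) * (xc^2 + yc^2 - r^2 - l*zc - l^2/4)
        - a^2 * xc^2 * (l + b^2) - b^2 * yc^2 * (l + a^2) = 0 := by
  rw [IsRoot.def, ← eval_charPoly_s14 ha hb, mul_eq_zero, or_iff_right (by positivity)]

theorem isRoot_derivative_charPoly_iff (ha : a ≠ 0) (hb : b ≠ 0) :
    (charPoly a b xc yc zc r).derivative.IsRoot l ↔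
      (2*l + a^2 + b^2) * (xc^2 + yc^2 - r^2 - l*zc - l^2/4)
        - (l + a^2) * (l + b^2) * (l/2 + zc) - a^2 * xc^2 - b^2 * yc^2 = 0 := by
  rw [IsRoot.def, ← eval_derivative_charPoly ha hb, mul_eq_zero, or_iff_right (by positivity)]

theorem isRoot_derivative_derivative_charPoly_iff (ha : a ≠ 0) (hb : b ≠ 0) :
    (charPoly a b xc yc zc r).derivative.derivative.IsRoot l ↔
      2 * (xc^2 + yc^2 - r^2 - l*zc - l^2/4) - 2 * (2*l + a^2 + b^2) * (l/2 + zc)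
        - (l + a^2) * (l + b^2) / 2 = 0 := by
  rw [IsRoot.def, ← eval_derivative_derivative_charPoly ha hb, mul_eq_zero,
    or_iff_right (by positivity)]

theorem Pmat_mulVec (x y z : ℝ) :
    Pmat a b *ᵥ ![x, y, z, 1] = ![x/a^2, y/b^2, -1/2, -z/2] := by
  ext i; fin_cases i <;> simp [Pmat, mulVec, dotProduct, Fin.sum_univ_four] <;> ring

theorem Smat_mulVec (x y z : ℝ) :
    Smat xc yc zc r *ᵥ ![x, y, z, 1] =
      ![x - xc, y - yc, z - zc, xc^2 + yc^2 + zc^2 - r^2 - xc*x - yc*y - zc*z] := by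
  ext i; fin_cases i <;> simp [Smat, mulVec, dotProduct, Fin.sum_univ_four] <;> ring

theorem quadForm_Pmat (x y z : ℝ) :
    ![x, y, z, 1] ⬝ᵥ Pmat a b *ᵥ ![x, y, z, 1] = x^2/a^2 + y^2/b^2 - z := by
  simp only [Pmat_mulVec, cons_dotProduct_cons, dotProduct_of_isEmpty]
  ring

theorem quadForm_Smat (x y z : ℝ) :
    ![x, y, z, 1] ⬝ᵥ Smat xc yc zc r *ᵥ ![x, y, z, 1] =
      (x - xc)^2 + (y - yc)^2 + (z - zc)^2 - r^2 := by
  simp only [Smat_mulVec, cons_dotProduct_cons, dotProduct_of_isEmpty]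
  ring

/-- The centre of 𝒮 is `p - (t/2) ∇F(p)` for the point `p = (x, y, x²/a² + y²/b²)` of 𝒫, where
`F(x, y, z) = x²/a² + y²/b² - z`, and 𝒮 passes through `p`. -/
def NormalSphereData (a b xc yc zc r x y t : ℝ) : Prop :=
  xc = x * (1 - t/a^2) ∧ yc = y * (1 - t/b^2) ∧ zc = x^2/a^2 + y^2/b^2 + t/2 ∧
    r^2 = t^2 * (x^2/a^4 + y^2/b^4 + 1/4)

theorem TangentAt.normalSphereData {x y z : ℝ} (h : TangentAt a b xc yc zc r x y z) :
    NormalSphereData a b xc yc zc r x y (2 * (zc - z)) := by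
  obtain ⟨hP, hS, hPS⟩ := h
  rw [quadForm_Pmat] at hP
  rw [quadForm_Smat] at hS
  simp only [Pmat_mulVec, Smat_mulVec] at hPS
  have hx := (hPS ![1, 0, 2*x/a^2, 0]).mp <| by
    simp only [cons_dotProduct_cons, dotProduct_of_isEmpty]; ring
  have hy := (hPS ![0, 1, 2*y/b^2, 0]).mp <| by
    simp only [cons_dotProduct_cons, dotProduct_of_isEmpty]; ring
  simp only [cons_dotProduct_cons, dotProduct_of_isEmpty] at hx hy
  refine ⟨by linear_combination -hx, by linear_combination -hy, by linear_combination -hP, ?_⟩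
  have hx' : x - xc = 2 * (zc - z) * x / a^2 := by linear_combination hx
  have hy' : y - yc = 2 * (zc - z) * y / b^2 := by linear_combination hy
  calc r^2 = (x - xc)^2 + (y - yc)^2 + (z - zc)^2 := by linear_combination -hS
    _ = _ := by rw [hx', hy']; ring

theorem NormalSphereData.Smat_mulVec_eq {x y t : ℝ} (h : NormalSphereData a b xc yc zc r x y t) :
    Smat xc yc zc r *ᵥ ![x, y, x^2/a^2 + y^2/b^2, 1] =
      t • Pmat a b *ᵥ ![x, y, x^2/a^2 + y^2/b^2, 1] := by
  obtain ⟨rfl, rfl, rfl, hr⟩ := h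
  rw [Smat_mulVec, Pmat_mulVec]
  simp only [smul_cons, smul_eq_mul, smul_empty, vecCons_inj, and_true]
  exact ⟨by ring, by ring, by ring, by linear_combination -hr⟩

theorem NormalSphereData.tangentAt {x y t : ℝ} (hr : r ≠ 0)
    (h : NormalSphereData a b xc yc zc r x y t) :
    TangentAt a b xc yc zc r x y (x^2/a^2 + y^2/b^2) := by
  have ht : t ≠ 0 := by
    rintro rfl
    exact hr (pow_eq_zero_iff two_ne_zero |>.mp (by simpa using h.2.2.2))
  have hP : ![x, y, x^2/a^2 + y^2/b^2, 1] ⬝ᵥ Pmat a b *ᵥ ![x, y, x^2/a^2 + y^2/b^2, 1] = 0 := by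
    rw [quadForm_Pmat]; ring
  refine ⟨hP, ?_, fun Y ↦ ?_⟩
  · rw [h.Smat_mulVec_eq, dotProduct_smul, hP, smul_zero]
  · rw [h.Smat_mulVec_eq, dotProduct_smul, smul_eq_mul, mul_eq_zero, or_iff_right ht]

theorem exists_tangentAt_iff (hr : r ≠ 0) :
    (∃ x y z, TangentAt a b xc yc zc r x y z) ↔ ∃ x y t, NormalSphereData a b xc yc zc r x y t :=
  ⟨fun ⟨x, y, _, h⟩ ↦ ⟨x, y, _, h.normalSphereData⟩,
    fun ⟨x, y, _, h⟩ ↦ ⟨x, y, _, h.tangentAt hr⟩⟩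

theorem NormalSphereData.sq_le {x y t : ℝ} (h : NormalSphereData a b xc yc zc r x y t) :
    t^2 ≤ 4 * r^2 := by
  have : 0 ≤ x^2/a^4 + y^2/b^4 := by positivity
  rw [h.2.2.2]
  nlinarith [mul_nonneg (sq_nonneg t) this]

theorem NormalSphereData.eq_zero_of_two_mul_le {x y : ℝ} (ha : a ≠ 0) (hb : b ≠ 0) (hr : 0 < r)
    (hsmall : 2 * r ≤ a^2) (h : NormalSphereData a b xc yc zc r x y (a^2)) : x = 0 ∧ y = 0 := by
  have hr2 : r^2 = x^2 + a^4 * y^2/b^4 + a^4/4 := by rw [h.2.2.2]; field_simp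
  have hy : 0 ≤ a^4 * y^2/b^4 := by positivity
  have hx : x = 0 := by nlinarith
  refine ⟨hx, ?_⟩
  have : a^4 * y^2/b^4 = 0 := by nlinarith
  simpa [ha, hb] using this

theorem two_le_rootMultiplicity_charPoly_iff (ha : a ≠ 0) (hb : b ≠ 0) (hr : r ≠ 0)
    (hla : l ≠ -a^2) (hlb : l ≠ -b^2) :
    2 ≤ rootMultiplicity l (charPoly a b xc yc zc r) ↔
      ∃ x y, NormalSphereData a b xc yc zc r x y (-l) := by
  change 1 < _ ↔ _
  rw [one_lt_rootMultiplicity_iff_isRoot (charPoly_ne_zero a b xc yc zc hr),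
    isRoot_charPoly_iff ha hb, isRoot_derivative_charPoly_iff ha hb]
  constructor
  · rintro ⟨hf, hf'⟩
    have hW : l + a^2 ≠ 0 := fun h ↦ hla (by linear_combination h)
    have hV : l + b^2 ≠ 0 := fun h ↦ hlb (by linear_combination h)
    have hz : (l/2 + zc) * (l + a^2)^2 * (l + b^2)^2 =
        a^2 * xc^2 * (l + b^2)^2 + b^2 * yc^2 * (l + a^2)^2 := by
      linear_combination (2*l + a^2 + b^2) * hf - (l + a^2) * (l + b^2) * hf'
    have hr2 : (l^2/4 - r^2) * (l + a^2)^2 * (l + b^2)^2 + l^2 * xc^2 * (l + b^2)^2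
        + l^2 * yc^2 * (l + a^2)^2 = 0 := by
      linear_combination (l + a^2) * (l + b^2) * hf + l * hz
    refine ⟨a^2 * xc / (l + a^2), b^2 * yc / (l + b^2), ?_, ?_, ?_, ?_⟩
    · field_simp; ring
    · field_simp; ring
    · field_simp; linear_combination 2 * hz
    · field_simp; linear_combination -4 * hr2
  · rintro ⟨x, y, rfl, rfl, rfl, hr2⟩
    rw [hr2]
    constructor <;> field_simp <;> ring

theorem three_le_rootMultiplicity_charPoly_iff (ha : 0 < a) (hab : a < b) (hr : 0 < r)
    (hsmall : 2 * r ≤ a^2) :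
    3 ≤ rootMultiplicity (-a^2) (charPoly a b xc yc zc r) ↔
      NormalSphereData a b xc yc zc r 0 0 (a^2) := by
  have hb : 0 < b := ha.trans hab
  change 2 < _ ↔ _
  rw [two_lt_rootMultiplicity_iff_isRoot (charPoly_ne_zero a b xc yc zc hr.ne'),
    isRoot_charPoly_iff ha.ne' hb.ne', isRoot_derivative_charPoly_iff ha.ne' hb.ne',
    isRoot_derivative_derivative_charPoly_iff ha.ne' hb.ne']
  constructor
  · rintro ⟨hf, hf', hf''⟩
    have hba : 0 < b^2 - a^2 := by nlinarith
    obtain rfl : xc = 0 := by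
      have : a^2 * (b^2 - a^2) * xc^2 = 0 := by linear_combination -hf
      simpa [ha.ne', hba.ne'] using this
    have hu : (b^2 - a^2)^2 * (zc - a^2/2) = b^2 * yc^2 := by
      linear_combination hf' - (b^2 - a^2)/2 * hf''
    have hkey : b^2 * (r^2 - a^4/4) = a^4 * (zc - a^2/2) := by
      linear_combination -hu - b^2/2 * hf''
    have hr2 : r^2 ≤ a^4/4 := by nlinarith
    -- `hu` gives `zc ≥ a²/2`, while `hkey` and smallness give `zc ≤ a²/2`.
    have hzc : zc - a^2/2 = 0 := by
      apply le_antisymm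
      · nlinarith [pow_pos ha 4]
      · nlinarith [sq_nonneg yc, pow_pos hba 2]
    refine ⟨by ring, ?_, by linear_combination hzc, ?_⟩
    · have : b^2 * yc^2 = 0 := by rw [← hu, hzc, mul_zero]
      simpa [hb.ne'] using this
    · have : b^2 * (r^2 - a^4/4) = 0 := by rw [hkey, hzc, mul_zero]
      have : r^2 - a^4/4 = 0 := by simpa [hb.ne'] using this
      linear_combination this
  · rintro ⟨rfl, rfl, rfl, hr2⟩
    rw [hr2]
    refine ⟨?_, ?_, ?_⟩ <;> field_simp <;> ring

end RootConfiguration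

/-- (a < b, smallness) tangency characterized by the root
configuration: either -a² is a root of multiplicity ≥ 3, or f has a multiple
real root different from -a² and -b². -/
theorem tangent_iff_root_configuration (a b r xc yc zc : ℝ)
    (ha : 0 < a) (hab : a < b) (hr : 0 < r) (hsmall : 2*r ≤ a^2) :
    (∃ x y z : ℝ, TangentAt a b xc yc zc r x y z) ↔
      (3 ≤ rootMultiplicity (-a^2) (charPoly a b xc yc zc r) ∨
       ∃ l : ℝ, l ≠ -a^2 ∧ l ≠ -b^2 ∧ (charPoly a b xc yc zc r).IsRoot l ∧
         2 ≤ rootMultiplicity l (charPoly a b xc yc zc r)) := by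
  have hb : 0 < b := ha.trans hab
  rw [exists_tangentAt_iff hr.ne']
  constructor
  · rintro ⟨x, y, t, h⟩
    by_cases hta : t = a^2
    · subst hta
      obtain ⟨rfl, rfl⟩ := h.eq_zero_of_two_mul_le ha.ne' hb.ne' hr hsmall
      exact .inl ((three_le_rootMultiplicity_charPoly_iff ha hab hr hsmall).mpr h)
    have hla : -t ≠ -a^2 := by rwa [ne_eq, neg_inj]
    have hlb : -t ≠ -b^2 := by
      rw [ne_eq, neg_inj]
      rintro rfl
      nlinarith [h.sq_le, pow_lt_pow_left₀ hab ha.le two_ne_zero]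
    have hmult := (two_le_rootMultiplicity_charPoly_iff ha.ne' hb.ne' hr.ne' hla hlb).mpr
      ⟨x, y, by rwa [neg_neg]⟩
    refine .inr ⟨-t, hla, hlb, ?_, hmult⟩
    exact (rootMultiplicity_pos (charPoly_ne_zero a b xc yc zc hr.ne')).mp (by omega)
  · rintro (h3 | ⟨l, hla, hlb, -, h2⟩)
    · exact ⟨0, 0, a^2, (three_le_rootMultiplicity_charPoly_iff ha hab hr hsmall).mp h3⟩
    · obtain ⟨x, y, h⟩ := (two_le_rootMultiplicity_charPoly_iff ha.ne' hb.ne' hr.ne' hla hlb).mp h2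
      exact ⟨x, y, -l, h⟩
end
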